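/- For all integers 0 ≤ k ≤ n, QB_s(n,k) = ∑_{j ≥ 0} qC(n-j, k) · G_{s-1}(k, j), where qC(m,k) := (Gaussian binomial coefficient [m choose k]_q) · q^{k(k-1)/2} (taken to be 0 when m < 0, k < 0, or k > m), and G_{s-1}(k,j) denotes the q-bi^{s-1}-nomial coefficient, defined as the coefficient of x^{j} in the polynomial ∏_{i=0}^{k-1} (1 + q^{i}x + (q^{i}x)^{2} + ⋯ + (q^{i}x)^{s-1}). -/
import Mathlib


/-- The q-quasi-bi^s-nomial coefficients `QB_s(n,k) ∈ ℚ(q)` (here `q = RatFunc.X`). -/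
noncomputable def QB (s : ℕ) : ℕ → ℤ → RatFunc ℚ
  | 0, k => if k = 0 then 1 else 0
  | n+1, k =>
    if k < 0 ∨ (n+1 : ℤ) < k then 0
    else QB s n k +
      ∑ j ∈ Finset.range s, if j ≤ n then RatFunc.X ^ (n - j) * QB s (n - j) (k - 1) else 0
  termination_by n _ => n
  decreasing_by all_goals omega

/-- The q-integer `[m]_q = 1 + q + ⋯ + q^{m-1}` in `ℚ(q)`. -/
noncomputable def qNat (m : ℕ) : RatFunc ℚ := ∑ i ∈ Finset.range m, RatFunc.X ^ i

/-- The q-factorial `[m]_q! = [1]_q [2]_q ⋯ [m]_q`. -/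
noncomputable def qFact (m : ℕ) : RatFunc ℚ := ∏ i ∈ Finset.Icc 1 m, qNat i

/-- The Gaussian binomial coefficient `[m choose k]_q = [m]_q!/([k]_q! [m-k]_q!)`,
zero when `k > m`. -/
noncomputable def qGauss (m k : ℕ) : RatFunc ℚ :=
  if k ≤ m then qFact m / (qFact k * qFact (m - k)) else 0

/-- `qC(m,k) = [m choose k]_q · q^{k(k-1)/2}`, taken to be `0` when `m < 0` or `k > m`. -/
noncomputable def qC (m : ℤ) (k : ℕ) : RatFunc ℚ :=
  if m < 0 then 0 else qGauss m.toNat k * RatFunc.X ^ (k * (k - 1) / 2)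

/-- The q-bi^t-nomial coefficient `G_t(k,j)`: the coefficient of `x^j` in
`∏_{i=0}^{k-1} (1 + q^i x + (q^i x)² + ⋯ + (q^i x)^t)`. -/
noncomputable def Gq (t k j : ℕ) : RatFunc ℚ :=
  ((∏ i ∈ Finset.range k,
      ∑ r ∈ Finset.range (t + 1),
        (Polynomial.C (RatFunc.X ^ i : RatFunc ℚ) * Polynomial.X) ^ r)).coeff j

open Finset Polynomial

lemma qNat_ne_zero {m : ℕ} (h : 1 ≤ m) : qNat m ≠ 0 := by
  have heq : qNat m = algebraMap (Polynomial ℚ) (RatFunc ℚ)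
      (∑ i ∈ Finset.range m, Polynomial.X ^ i) := by
    simp [qNat, map_sum, map_pow, RatFunc.algebraMap_X]
  rw [heq]
  intro hcon
  have h2 : (∑ i ∈ range m, (Polynomial.X : Polynomial ℚ) ^ i) = 0 :=
    RatFunc.algebraMap_injective ℚ (by simpa using hcon)
  have h3 := congrArg (Polynomial.eval 1) h2
  simp [Polynomial.eval_finset_sum] at h3
  omega

lemma qFact_ne_zero (m : ℕ) : qFact m ≠ 0 := by
  refine Finset.prod_ne_zero_iff.2 fun i hi => qNat_ne_zero ?_
  exact (Finset.mem_Icc.1 hi).1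

lemma qNat_add (a b : ℕ) : qNat (a + b) = qNat a + RatFunc.X ^ a * qNat b := by
  rw [qNat, Finset.sum_range_add, qNat, qNat, Finset.mul_sum]
  simp [pow_add]

lemma qFact_succ (m : ℕ) : qFact (m + 1) = qFact m * qNat (m + 1) := by
  rw [qFact, qFact, Finset.prod_Icc_succ_top (by omega)]

lemma qFact_zero : qFact 0 = 1 := by simp [qFact]

lemma qGauss_self (m : ℕ) : qGauss m m = 1 := by
  rw [qGauss, if_pos le_rfl]
  rw [Nat.sub_self, qFact_zero, mul_one, div_self (qFact_ne_zero m)]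

lemma qGauss_zero (m : ℕ) : qGauss m 0 = 1 := by
  rw [qGauss, if_pos (Nat.zero_le m)]
  rw [qFact_zero, one_mul, Nat.sub_zero, div_self (qFact_ne_zero m)]

lemma qGauss_pascal (m k : ℕ) (h1 : 1 ≤ k) (h2 : k ≤ m) :
    qGauss (m+1) k = qGauss m k + RatFunc.X ^ (m + 1 - k) * qGauss m (k-1) := by
  obtain ⟨k', rfl⟩ : ∃ k', k = k' + 1 := ⟨k - 1, by omega⟩
  rw [qGauss, if_pos (by omega), qGauss, if_pos (by omega), qGauss, if_pos (by omega)]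
  have e1 : m + 1 - (k' + 1) = m - k' := by omega
  have e2 : k' + 1 - 1 = k' := by omega
  rw [e1, e2]
  have hsplit : qNat (m + 1) = qNat (m - k') + RatFunc.X ^ (m - k') * qNat (k' + 1) := by
    have : m + 1 = (m - k') + (k' + 1) := by omega
    rw [this, qNat_add]
  have hfm1 : qFact (m + 1) = qFact m * qNat (m + 1) := qFact_succ m
  have hfmk : qFact (m - k') = qFact (m - (k'+1)) * qNat (m - k') := by
    have : m - k' = (m - (k' + 1)) + 1 := by omega
    rw [this, qFact_succ, ← this]
  have hfk : qFact (k' + 1) = qFact k' * qNat (k' + 1) := qFact_succ k'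
  have n1 := qFact_ne_zero (k' + 1)
  have n2 := qFact_ne_zero (m - (k' + 1))
  have n3 := qFact_ne_zero (m - k')
  have n4 := qFact_ne_zero k'
  have n5 : qNat (m - k') ≠ 0 := qNat_ne_zero (by omega)
  have n6 : qNat (k' + 1) ≠ 0 := qNat_ne_zero (by omega)
  rw [hfm1, hsplit, hfmk, hfk]
  field_simp

lemma tri_succ (k : ℕ) : (k+1) * ((k+1) - 1) / 2 = k + k * (k - 1) / 2 := by
  have h1 : (k+1) * ((k+1) - 1) / 2 = (k+1).choose 2 := (Nat.choose_two_right (k+1)).symm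
  have h2 : k * (k - 1) / 2 = k.choose 2 := (Nat.choose_two_right k).symm
  rw [h1, h2, Nat.choose_succ_succ, Nat.choose_one_right, Nat.add_comm]

lemma tri_succ' (k : ℕ) : (k+1) * k / 2 = k + k * (k - 1) / 2 := by
  have := tri_succ k; simpa using this

lemma qC_natCast (m k : ℕ) : qC (m : ℤ) k = qGauss m k * RatFunc.X ^ (k * (k-1) / 2) := by
  rw [qC, if_neg (by omega)]
  simp

lemma qGauss_of_lt {m k : ℕ} (h : m < k) : qGauss m k = 0 := by
  rw [qGauss, if_neg (by omega)]

lemma qC_pascal (m k' : ℕ) : qC ((m:ℤ)+1) (k'+1)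
    = qC (m:ℤ) (k'+1) + RatFunc.X ^ m * qC (m:ℤ) k' := by
  have hcast : ((m:ℤ)+1) = ((m+1 : ℕ) : ℤ) := by push_cast; ring
  rw [hcast, qC_natCast, qC_natCast, qC_natCast]
  rcases lt_trichotomy m k' with h | rfl | h
  · rw [qGauss_of_lt (by omega), qGauss_of_lt (by omega), qGauss_of_lt (by omega)]
    ring
  · rw [qGauss_self, qGauss_of_lt (by omega), qGauss_self]
    rw [tri_succ]
    ring_nf
  · rw [qGauss_pascal m (k'+1) (by omega) (by omega),
      show m + 1 - (k'+1) = m - k' from by omega,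
      show k' + 1 - 1 = k' from rfl, add_mul, tri_succ']
    rw [pow_add (RatFunc.X : RatFunc ℚ) k' (k' * (k'-1)/2)]
    have hx : (RatFunc.X : RatFunc ℚ) ^ (m - k') * RatFunc.X ^ k' = RatFunc.X ^ m := by
      rw [← pow_add]; congr 1; omega
    rw [← hx]; ring

lemma Gq_zero (t j : ℕ) : Gq t 0 j = if j = 0 then 1 else 0 := by
  simp [Gq, Polynomial.coeff_one]

lemma coeff_comp_scale (p : Polynomial (RatFunc ℚ)) (j : ℕ) :
    (p.comp (Polynomial.C RatFunc.X * Polynomial.X)).coeff j = RatFunc.X ^ j * p.coeff j := by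
  induction p using Polynomial.induction_on' with
  | add p q hp hq => simp [Polynomial.add_comp, hp, hq, mul_add]
  | monomial n a =>
    rw [← Polynomial.C_mul_X_pow_eq_monomial, Polynomial.mul_comp, Polynomial.pow_comp,
      Polynomial.C_comp, Polynomial.X_comp, mul_pow, ← Polynomial.C_pow, ← mul_assoc,
      ← Polynomial.C_mul]
    simp only [Polynomial.coeff_C_mul, Polynomial.coeff_X_pow]
    by_cases hj : j = n
    · subst hj; simp [mul_comm]
    · simp [hj]

lemma Gq_succ (t k j : ℕ) : Gq t (k+1) j
    = ∑ r ∈ Finset.range (t+1), if r ≤ j then RatFunc.X ^ (j-r) * Gq t k (j-r) else 0 := by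
  set f : ℕ → Polynomial (RatFunc ℚ) := fun i =>
    ∑ r ∈ Finset.range (t + 1), (Polynomial.C (RatFunc.X ^ i) * Polynomial.X) ^ r with hfdef
  have hf : ∀ i, f (i+1) = (f i).comp (Polynomial.C RatFunc.X * Polynomial.X) := by
    intro i
    rw [hfdef]
    simp only [Polynomial.sum_comp, Polynomial.pow_comp, Polynomial.mul_comp,
      Polynomial.C_comp, Polynomial.X_comp]
    congr 1
    ext r
    congr 2
    rw [← mul_assoc, ← Polynomial.C_mul, ← pow_succ]
  have hprod : (∏ i ∈ Finset.range (k+1), f i)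
      = (∏ i ∈ Finset.range k, f i).comp (Polynomial.C RatFunc.X * Polynomial.X)
        * (∑ r ∈ Finset.range (t+1), Polynomial.X ^ r) := by
    rw [Finset.prod_range_succ']
    congr 1
    · rw [Polynomial.prod_comp]
      exact Finset.prod_congr rfl fun i _ => hf i
    · rw [hfdef]; simp
  have : Gq t (k+1) j = ((∏ i ∈ Finset.range k, f i).comp
      (Polynomial.C RatFunc.X * Polynomial.X) * (∑ r ∈ Finset.range (t+1), Polynomial.X ^ r)).coeff j := by
    rw [Gq, ← hprod, hfdef]
  rw [this, Finset.mul_sum, Polynomial.finset_sum_coeff]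
  refine Finset.sum_congr rfl fun r _ => ?_
  rw [Polynomial.coeff_mul_X_pow', coeff_comp_scale]
  split <;> rfl

lemma qC_zero_of_lt {m : ℤ} {k : ℕ} (h : m < k) : qC m k = 0 := by
  rw [qC]
  split
  · rfl
  · rename_i hm
    rw [qGauss_of_lt (by omega : m.toNat < k), zero_mul]

lemma qC_neg {m : ℤ} (k : ℕ) (h : m < 0) : qC m k = 0 := by rw [qC, if_pos h]

lemma QB_neg (s m : ℕ) : QB s m (-1) = 0 := by
  cases m with
  | zero => rw [QB]; norm_num
  | succ m => rw [QB]; exact if_pos (Or.inl (by norm_num))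

lemma sum_shift (f : ℕ → RatFunc ℚ) (r n : ℕ) :
    ∑ j ∈ Finset.range (n+1), (if r ≤ j then f (j - r) else 0)
      = if r ≤ n then ∑ i ∈ Finset.range (n-r+1), f i else 0 := by
  split
  · rename_i h
    rw [show n + 1 = r + (n - r + 1) from by omega, Finset.sum_range_add]
    rw [Finset.sum_eq_zero (fun j hj => by
      rw [if_neg]; have := Finset.mem_range.1 hj; omega), zero_add]
    refine Finset.sum_congr rfl fun i _ => ?_
    rw [if_pos (by omega)]
    congr 1
    omega
  · rename_i h
    refine Finset.sum_eq_zero fun j hj => ?_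
    rw [if_neg]
    have := Finset.mem_range.1 hj; omega

lemma key (t n k' : ℕ) :
    ∑ j ∈ Finset.range (n+2), qC ((n:ℤ)+1-j) (k'+1) * Gq t (k'+1) j
    = ∑ j ∈ Finset.range (n+1), qC ((n:ℤ)-j) (k'+1) * Gq t (k'+1) j
      + ∑ r ∈ Finset.range (t+1), (if r ≤ n then
          RatFunc.X ^ (n-r) * ∑ i ∈ Finset.range (n-r+1), qC ((n:ℤ)-r-i) k' * Gq t k' i
          else 0) := by
  rw [Finset.sum_range_succ, show (n:ℤ)+1-((n+1:ℕ):ℤ) = 0 from by push_cast; ring,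
    qC_zero_of_lt (by exact_mod_cast Nat.succ_pos k' : (0:ℤ) < ((k'+1:ℕ):ℤ)), zero_mul, add_zero]
  have step1 : ∀ j ∈ Finset.range (n+1), qC ((n:ℤ)+1-j) (k'+1) * Gq t (k'+1) j
      = qC ((n:ℤ)-j) (k'+1) * Gq t (k'+1) j
        + RatFunc.X ^ (n-j) * qC ((n:ℤ)-j) k' * Gq t (k'+1) j := by
    intro j hj
    have hj' : j ≤ n := by have := Finset.mem_range.1 hj; omega
    have hc : (n:ℤ) - j = ((n - j : ℕ) : ℤ) := by omega
    have hc1 : (n:ℤ)+1-j = ((n-j:ℕ):ℤ) + 1 := by omega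
    rw [hc1, qC_pascal (n-j) k', hc]
    ring
  rw [Finset.sum_congr rfl step1, Finset.sum_add_distrib]
  congr 1
  have step2 : ∀ j ∈ Finset.range (n+1),
      RatFunc.X ^ (n-j) * qC ((n:ℤ)-j) k' * Gq t (k'+1) j
      = ∑ r ∈ Finset.range (t+1), (if r ≤ j then
          RatFunc.X ^ (n-r) * qC ((n:ℤ)-r-(j-r:ℕ)) k' * Gq t k' (j-r) else 0) := by
    intro j hj
    have hj' : j ≤ n := by have := Finset.mem_range.1 hj; omega
    rw [Gq_succ, Finset.mul_sum]
    refine Finset.sum_congr rfl fun r _ => ?_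
    split
    · rename_i hr
      rw [show RatFunc.X ^ (n-r) = RatFunc.X ^ (n-j) * RatFunc.X ^ (j-r) from by
        rw [← pow_add]; congr 1; omega]
      rw [show (n:ℤ)-r-((j-r:ℕ):ℤ) = (n:ℤ)-j from by omega]
      ring
    · rw [mul_zero]
  rw [Finset.sum_congr rfl step2, Finset.sum_comm]
  refine Finset.sum_congr rfl fun r _ => ?_
  rw [sum_shift (fun i => RatFunc.X ^ (n-r) * qC ((n:ℤ)-r-i) k' * Gq t k' i) r n]
  split
  · rw [Finset.mul_sum]
    refine Finset.sum_congr rfl fun i _ => ?_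
    ring
  · rfl

lemma R_zero (t n : ℕ) : ∑ j ∈ Finset.range (n+1), qC ((n:ℤ)-j) 0 * Gq t 0 j = 1 := by
  rw [Finset.sum_eq_single 0]
  · rw [Gq_zero, if_pos rfl, mul_one, show (n:ℤ)-(0:ℕ) = ((n:ℕ):ℤ) from by push_cast; ring,
      qC_natCast, qGauss_zero]
    norm_num
  · intro j _ hj
    rw [Gq_zero, if_neg hj, mul_zero]
  · intro h
    exact absurd (Finset.mem_range.2 (by omega)) h

lemma QB_eq_sum (t : ℕ) : ∀ (n : ℕ) (k : ℕ),
    QB (t+1) n (k:ℤ) = ∑ j ∈ Finset.range (n+1), qC ((n:ℤ)-j) k * Gq t k j := by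
  intro n
  induction n using Nat.strong_induction_on with
  | _ n ih =>
  intro k
  match n with
  | 0 =>
    rw [QB, Finset.sum_range_one]
    cases k with
    | zero =>
      simp [qC, Gq_zero, qGauss_zero, qFact_zero]
    | succ k' =>
      rw [if_neg (by exact_mod_cast Nat.succ_ne_zero k'),
        qC_zero_of_lt (by push_cast; omega), zero_mul]
  | n+1 =>
    rw [QB]
    by_cases hk : k ≤ n+1
    · rw [if_neg (by push_cast; omega)]
      cases k with
      | zero =>
        have hz : ∀ j ∈ Finset.range (t+1),
            (if j ≤ n then RatFunc.X ^ (n-j) * QB (t+1) (n-j) (((0:ℕ):ℤ) - 1) else 0) = 0 := by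
          intro j _
          split
          · rw [show ((0:ℕ):ℤ) - 1 = -1 from by norm_num, QB_neg, mul_zero]
          · rfl
        rw [Finset.sum_eq_zero hz, add_zero, ih n (by omega) 0, R_zero, R_zero]
      | succ k' =>
        have hι : ∀ j ∈ Finset.range (t+1),
            (if j ≤ n then RatFunc.X ^ (n-j) * QB (t+1) (n-j) (((k'+1:ℕ):ℤ) - 1) else 0)
            = (if j ≤ n then RatFunc.X ^ (n-j)
                * ∑ i ∈ Finset.range (n-j+1), qC (((n-j:ℕ):ℤ)-i) k' * Gq t k' i else 0) := by
          intro j _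
          split
          · rw [show ((k'+1:ℕ):ℤ) - 1 = ((k':ℕ):ℤ) from by push_cast; ring,
              ih (n-j) (by omega) k']
          · rfl
        rw [Finset.sum_congr rfl hι, ih n (by omega) (k'+1), eq_comm,
          show n+1+1 = n+2 from rfl]
        push_cast
        rw [key t n k']
        congr 1
        refine Finset.sum_congr rfl fun r _ => ?_
        split
        · rename_i hr
          congr 1
          refine Finset.sum_congr rfl fun i _ => ?_
          rw [show (n:ℤ)-r-i = ((n-r:ℕ):ℤ)-i from by omega]
        · rfl
    · rw [if_pos (by push_cast; omega)]
      refine (Finset.sum_eq_zero fun j hj => ?_).symm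
      have := Finset.mem_range.1 hj
      rw [qC_zero_of_lt (by push_cast; omega), zero_mul]

/-- For `0 ≤ k ≤ n`: `QB_s(n,k) = ∑_{j ≥ 0} qC(n-j, k) · G_{s-1}(k, j)`. -/
theorem QB_explicit (s n k : ℕ) (hs : 1 ≤ s) (hk : k ≤ n) :
    QB s n (k : ℤ) = ∑ᶠ j : ℕ, qC ((n : ℤ) - j) k * Gq (s - 1) k j := by
  obtain ⟨t, rfl⟩ : ∃ t, s = t + 1 := ⟨s - 1, by omega⟩
  have hsupp : (Function.support fun j : ℕ => qC ((n : ℤ) - j) k * Gq (t+1-1) k j)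
      ⊆ ↑(Finset.range (n+1)) := by
    intro j hj
    simp only [Function.mem_support, ne_eq] at hj
    by_contra hmem
    have hjn : ¬ j < n + 1 := fun h => hmem (Finset.mem_coe.2 (Finset.mem_range.2 h))
    exact hj (by rw [qC_neg k (by omega), zero_mul])
  rw [finsum_eq_sum_of_support_subset _ hsupp, show t+1-1 = t from rfl, QB_eq_sum t n k]
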